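/- arXiv:2211.09275 — 2 statements merged into one kernel-verified Lean document; each statement's English description precedes it below -/
import Mathlib

section
/- Let (Ω, 𝔽, ℙ) be a probability space, let A ∈ ℝ^{n×n}, F ∈ ℝ^{n×m}, x_0 ∈ ℝⁿ (deterministic), and let w_0, w_1, w_2, … be square-integrable ℝ^m-valued random vectors that are pairwise independent, each with mean zero, and satisfying 𝔼[⟨v, w_t⟩²] ≥ ε_w·‖v‖² for some ε_w > 0, all t and all v ∈ ℝ^m. Define x_{k+1} = A x_k + F w_k. If the pair (A, F) is reachable (the controllability matrix [F, AF, …, A^{n-1}F] has rank n), then there exists ε_R > 0 such that for every k ≥ n and every v ∈ ℝⁿ, 𝔼[⟨v, x_k⟩²] ≥ ε_w · ε_R · ‖v‖². -/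
/-!
Unrolling the recursion gives `⟨v, x_k⟩ = ⟨v, A^k x₀⟩ + ∑_{j<k} ⟨(A^j F)ᵀ v, w_{k-1-j}⟩`. The noise
terms are centred and pairwise independent, so the second moment is the square of the
deterministic part plus the second moments of the noise terms. Keeping only the terms `j < n`
and using the excitation bound leaves `ε_w ∑_{j<n} ‖(A^j F)ᵀ v‖² = ε_w ‖Rᵀ v‖²` for the
reachability matrix `R`. Full rank makes `v ↦ Rᵀ v` injective, hence bounded below on the
finite-dimensional space `ℝⁿ`.
-/

open Matrix MeasureTheory ProbabilityTheory

theorem Matrix.vecMul_injective_of_rank_eq_card {K ι κ : Type*} [Field K] [Fintype ι]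
    [Fintype κ] {R : Matrix ι κ K} (h : R.rank = Fintype.card ι) : Function.Injective R.vecMul :=
  vecMul_injective_iff.mpr <| linearIndependent_iff_card_eq_finrank_span.mpr <| by
    rw [Set.finrank, ← rank_eq_finrank_span_row, h]

theorem EuclideanSpace.norm_toLp_sq {ι : Type*} [Fintype ι] (u : ι → ℝ) :
    ‖WithLp.toLp 2 u‖ ^ 2 = u ⬝ᵥ u := by
  rw [← real_inner_self_eq_norm_sq, EuclideanSpace.inner_toLp_toLp, star_trivial]

theorem Matrix.exists_pos_mul_dotProduct_self_le_vecMul {ι κ : Type*} [Fintype ι] [Fintype κ]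
    (R : Matrix ι κ ℝ) (hR : Function.Injective R.vecMul) :
    ∃ c > (0 : ℝ), ∀ v : ι → ℝ, c * (v ⬝ᵥ v) ≤ (v ᵥ* R) ⬝ᵥ (v ᵥ* R) := by
  classical
  set f := toLpLin 2 2 Rᵀ
  have hf : ∀ v, f (WithLp.toLp 2 v) = WithLp.toLp 2 (v ᵥ* R) := fun v => by
    rw [toLpLin_toLp, toLin'_apply, mulVec_transpose]
  have hker : LinearMap.ker f = ⊥ := by
    refine LinearMap.ker_eq_bot.mpr ?_
    rintro ⟨x⟩ ⟨y⟩ hxy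
    rw [hf, hf] at hxy
    rw [hR (WithLp.toLp_injective 2 hxy)]
  obtain ⟨K, hK, hanti⟩ := f.exists_antilipschitzWith hker
  refine ⟨((K : ℝ) ^ 2)⁻¹, by positivity, fun v => ?_⟩
  have hbound := ZeroHomClass.bound_of_antilipschitz f hanti (WithLp.toLp 2 v)
  rw [hf] at hbound
  rw [← EuclideanSpace.norm_toLp_sq, ← EuclideanSpace.norm_toLp_sq,
    inv_mul_le_iff₀ (by positivity), ← mul_pow]
  exact pow_le_pow_left₀ (norm_nonneg _) hbound 2

theorem Matrix.eq_pow_mulVec_add_sum_of_forall_succ {R ι : Type*} [CommRing R] [Fintype ι]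
    [DecidableEq ι] (A : Matrix ι ι R) {x b : ℕ → ι → R}
    (hx : ∀ k, x (k + 1) = A *ᵥ x k + b k) (k : ℕ) :
    x k = A ^ k *ᵥ x 0 + ∑ j ∈ Finset.range k, A ^ j *ᵥ b (k - 1 - j) := by
  induction k with
  | zero => simp
  | succ k ih =>
    rw [hx, ih, mulVec_add, mulVec_mulVec, ← pow_succ', Finset.sum_range_succ', add_assoc,
      mulVec_sum]
    simp only [mulVec_mulVec, ← pow_succ', pow_zero, one_mulVec, Nat.add_sub_cancel,
      Nat.sub_zero, Nat.sub_sub, Nat.add_comm 1]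

/-- The reachability matrix `[F, AF, …, A^{p-1}F]`, with columns indexed by `Fin p × κ`. -/
def Matrix.reachability {R ι κ : Type*} [CommRing R] [Fintype ι] [DecidableEq ι]
    (A : Matrix ι ι R) (F : Matrix ι κ R) (p : ℕ) : Matrix ι (Fin p × κ) R :=
  of fun i jk => (A ^ (jk.1 : ℕ) * F) i jk.2

theorem Matrix.vecMul_reachability_dotProduct_self {R ι κ : Type*} [CommRing R] [Fintype ι]
    [DecidableEq ι] [Fintype κ] (A : Matrix ι ι R) (F : Matrix ι κ R) (p : ℕ) (v : ι → R) :
    (v ᵥ* reachability A F p) ⬝ᵥ (v ᵥ* reachability A F p)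
      = ∑ j ∈ Finset.range p, (v ᵥ* (A ^ j * F)) ⬝ᵥ (v ᵥ* (A ^ j * F)) := by
  rw [← Fin.sum_univ_eq_sum_range (fun j => (v ᵥ* (A ^ j * F)) ⬝ᵥ (v ᵥ* (A ^ j * F)))]
  simp only [dotProduct, Fintype.sum_prod_type]
  rfl

section
variable {Ω ι : Type*} [MeasurableSpace Ω] {μ : Measure Ω} [Fintype ι] {X : Ω → ι → ℝ}

theorem MeasureTheory.memLp_dotProduct {p : ENNReal} (hX : ∀ i, MemLp (fun ω => X ω i) p μ)
    (u : ι → ℝ) : MemLp (fun ω => u ⬝ᵥ X ω) p μ :=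
  memLp_finsetSum _ fun i _ => (hX i).const_mul (u i)

theorem MeasureTheory.integral_dotProduct (hX : ∀ i, Integrable (fun ω => X ω i) μ)
    (u : ι → ℝ) : ∫ ω, u ⬝ᵥ X ω ∂μ = u ⬝ᵥ fun i => ∫ ω, X ω i ∂μ := by
  simp only [dotProduct]
  rw [integral_finsetSum _ fun i _ => (hX i).const_mul (u i)]
  simp only [integral_const_mul]

end

theorem ProbabilityTheory.integral_sq_const_add_sum {Ω ι : Type*} [MeasurableSpace Ω]
    {μ : Measure Ω} [IsProbabilityMeasure μ] {Y : ι → Ω → ℝ} {s : Finset ι}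
    (hL2 : ∀ i ∈ s, MemLp (Y i) 2 μ) (hmean : ∀ i ∈ s, ∫ ω, Y i ω ∂μ = 0)
    (hind : Set.Pairwise ↑s fun i j => IndepFun (Y i) (Y j) μ) (c : ℝ) :
    ∫ ω, (c + ∑ i ∈ s, Y i ω) ^ 2 ∂μ = c ^ 2 + ∑ i ∈ s, ∫ ω, Y i ω ^ 2 ∂μ := by
  have hS : MemLp (fun ω => c + ∑ i ∈ s, Y i ω) 2 μ :=
    (memLp_const c).add (memLp_finsetSum s hL2)
  have hmeanS : ∫ ω, (c + ∑ i ∈ s, Y i ω) ∂μ = c := by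
    rw [integral_add (integrable_const c) (integrable_finsetSum s fun i hi =>
      (hL2 i hi).integrable one_le_two), integral_finsetSum s fun i hi =>
      (hL2 i hi).integrable one_le_two, Finset.sum_eq_zero hmean]
    simp
  have hvarS : Var[fun ω => c + ∑ i ∈ s, Y i ω; μ] = ∑ i ∈ s, ∫ ω, Y i ω ^ 2 ∂μ := by
    have := variance_const_add (memLp_finsetSum' s hL2).aestronglyMeasurable c (μ := μ)
    simp only [Finset.sum_apply] at this
    rw [this, IndepFun.variance_sum hL2 hind]
    refine Finset.sum_congr rfl fun i hi => ?_
    rw [variance_eq_sub (hL2 i hi), hmean i hi]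
    simp
  rw [variance_eq_sub hS, hmeanS] at hvarS
  simp only [Pi.pow_apply] at hvarS
  linarith

/-- For the stochastic recursion `x_{k+1} = A x_k + F w_k` driven by pairwise independent,
mean-zero, square-integrable noise with `𝔼[⟨v,w_t⟩²] ≥ ε_w‖v‖²`, if `(A, F)` is reachable
then there exists `ε_R > 0` with `𝔼[⟨v, x_k⟩²] ≥ ε_w ε_R ‖v‖²` for all `k ≥ n`. -/
theorem second_moment_lower_bound_of_reachable {Ω : Type*} [MeasurableSpace Ω]
    (μ : Measure Ω) [IsProbabilityMeasure μ]
    (n m : ℕ) (A : Matrix (Fin n) (Fin n) ℝ) (F : Matrix (Fin n) (Fin m) ℝ)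
    (x0 : Fin n → ℝ) (w : ℕ → Ω → Fin m → ℝ)
    (hL2 : ∀ t i, MemLp (fun ω => w t ω i) 2 μ)
    (hindep : ∀ s t, s ≠ t → IndepFun (w s) (w t) μ)
    (hmean : ∀ t i, ∫ ω, w t ω i ∂μ = 0)
    (εw : ℝ) (hεw : 0 < εw)
    (hvar : ∀ t (v : Fin m → ℝ), ∫ ω, (v ⬝ᵥ w t ω) ^ 2 ∂μ ≥ εw * (v ⬝ᵥ v))
    (x : ℕ → Ω → Fin n → ℝ)
    (hx0 : ∀ ω, x 0 ω = x0)
    (hx : ∀ k ω, x (k + 1) ω = A.mulVec (x k ω) + F.mulVec (w k ω))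
    (hreach : (Matrix.of fun (i : Fin n) (jk : Fin n × Fin m) =>
        (A ^ (jk.1 : ℕ) * F) i jk.2).rank = n) :
    ∃ εR > (0 : ℝ), ∀ k, n ≤ k → ∀ v : Fin n → ℝ,
      ∫ ω, (v ⬝ᵥ x k ω) ^ 2 ∂μ ≥ εw * εR * (v ⬝ᵥ v) := by
  obtain ⟨εR, hεR, hR⟩ := exists_pos_mul_dotProduct_self_le_vecMul (reachability A F n)
    (vecMul_injective_of_rank_eq_card (by rw [Fintype.card_fin]; exact hreach))
  refine ⟨εR, hεR, fun k hk v => ?_⟩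
  set u : ℕ → Fin m → ℝ := fun j => v ᵥ* (A ^ j * F)
  set Y : ℕ → Ω → ℝ := fun j ω => u j ⬝ᵥ w (k - 1 - j) ω
  have hdecomp : ∀ ω, v ⬝ᵥ x k ω = v ⬝ᵥ (A ^ k *ᵥ x0) + ∑ j ∈ Finset.range k, Y j ω := by
    intro ω
    rw [eq_pow_mulVec_add_sum_of_forall_succ A (x := (x · ω)) (fun k => hx k ω) k, hx0,
      dotProduct_add, dotProduct_sum]
    simp only [Y, u, mulVec_mulVec, dotProduct_mulVec]
  have hmoment : ∫ ω, (v ⬝ᵥ x k ω) ^ 2 ∂μ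
      = (v ⬝ᵥ (A ^ k *ᵥ x0)) ^ 2 + ∑ j ∈ Finset.range k, ∫ ω, Y j ω ^ 2 ∂μ := by
    simp only [hdecomp]
    refine integral_sq_const_add_sum (fun j _ => memLp_dotProduct (hL2 _) _) (fun j _ => ?_)
      (fun i hi j hj hij => ?_) _
    · simp only [integral_dotProduct fun i => (hL2 _ i).integrable one_le_two, hmean]
      exact dotProduct_zero _
    · simp only [Finset.coe_range, Set.mem_Iio] at hi hj
      exact (hindep _ _ (by omega)).comp (φ := (u i ⬝ᵥ ·)) (ψ := (u j ⬝ᵥ ·)) (by fun_prop)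
        (by fun_prop)
  calc ∫ ω, (v ⬝ᵥ x k ω) ^ 2 ∂μ
      ≥ ∑ j ∈ Finset.range n, ∫ ω, Y j ω ^ 2 ∂μ := by
        rw [hmoment]
        refine le_add_of_nonneg_of_le (sq_nonneg _) (Finset.sum_le_sum_of_subset_of_nonneg
          (Finset.range_subset_range.mpr hk) fun j _ _ => integral_nonneg fun ω => sq_nonneg _)
    _ ≥ ∑ j ∈ Finset.range n, εw * (u j ⬝ᵥ u j) := Finset.sum_le_sum fun j _ => hvar _ _
    _ = εw * ((v ᵥ* reachability A F n) ⬝ᵥ (v ᵥ* reachability A F n)) := by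
        rw [vecMul_reachability_dotProduct_self, Finset.mul_sum]
    _ ≥ εw * εR * (v ⬝ᵥ v) := by
        rw [mul_assoc]
        exact mul_le_mul_of_nonneg_left (hR v) hεw.le
end

section
/- (Theorem 1: persistent excitation under linear feedback.) Let n_x, n_u, n_w, p be positive integers, A_0, …, A_p ∈ ℝ^{n_x×n_x}, B_0, …, B_p ∈ ℝ^{n_x×n_u}, K ∈ ℝ^{n_u×n_x}, F ∈ ℝ^{n_x×n_w}, and θ* ∈ ℝ^p. Define A_{K,i} := A_i + B_i K for i = 1, …, p, A_K(θ*) := A_0 + B_0 K + ∑_{i=1}^{p} θ*_i A_{K,i}, and the regressor Φ(x, u) ∈ ℝ^{n_x×p} whose i-th column is A_i x + B_i u. Let (Ω, 𝔽, ℙ) be a probability space and let w_0, w_1, … be square-integrable ℝ^{n_w}-valued random vectors that are pairwise independent, each with mean zero, satisfying 𝔼[⟨v, w_t⟩²] ≥ ε_w·‖v‖² for some ε_w > 0, all t and all v. Let x_0 ∈ ℝ^{n_x} be deterministic and x_{t+1} = A_K(θ*) x_t + F w_t. Assume: (i) the pair (A_K(θ*), F) is reachable; (ii) the matrices A_{K,1},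 …, A_{K,p} are linearly independent. Then for every integer N_u > n_x there exists ε_Φ > 0 such that for all t ∈ ℕ and all θ ∈ ℝ^p, ∑_{k=t}^{t+N_u-1} 𝔼[‖Φ(x_k, K x_k) θ‖²] ≥ ε_Φ·‖θ‖². -/
/-!
Write `Φ(x, K x) θ = M_θ x` with `M_θ = ∑ θ_i A_{K,i}`. Unrolling the recursion,
`x_k = A_K^k x_0 + ∑_{s<k} A_K^{k-1-s} F w_s`, and since the `w_s` are pairwise independent with
mean zero their contributions are uncorrelated, so
`𝔼‖M_θ x_k‖² ≥ ε_w ∑_{r<k} ‖M_θ A_K^r F‖²`. For `k ≥ n_x` the right side dominates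
`ε_w ‖M_θ R‖²`, where `R = [F, A_K F, …, A_K^{n_x-1} F]`. As `R` has full row rank and the
`A_{K,i}` are linearly independent, `θ ↦ M_θ R` is injective, hence bounded below on the unit
sphere. Every window of length `N_u > n_x` contains such a `k`.
-/

open Matrix MeasureTheory ProbabilityTheory

namespace Matrix

theorem eq_zero_of_mul_eq_zero_of_rank_eq_card {l m c K : Type*} [Fintype m] [Fintype c]
    [Field K] {N : Matrix l m K} {R : Matrix m c K} (hR : R.rank = Fintype.card m)
    (hNR : N * R = 0) : N = 0 := by
  classical
  have hsurj : Function.Surjective R.mulVecLin := LinearMap.range_eq_top.mp <|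
    Submodule.eq_top_of_finrank_eq (by rw [← rank, hR, Module.finrank_fintype_fun_eq_card])
  have h : N.mulVecLin.comp R.mulVecLin = (0 : (m → K) →ₗ[K] (l → K)).comp R.mulVecLin := by
    rw [← mulVecLin_mul, hNR]
    ext
    simp
  ext i j
  simpa using
    congrFun (LinearMap.congr_fun ((LinearMap.cancel_right hsurj).mp h) (Pi.single j 1)) i

theorem norm_toLp_sq_eq_dotProduct {ι : Type*} [Fintype ι] (v : ι → ℝ) :
    ‖WithLp.toLp 2 v‖ ^ 2 = v ⬝ᵥ v := by
  rw [EuclideanSpace.real_norm_sq_eq (WithLp.toLp 2 v)]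
  simp [dotProduct, sq]

theorem exists_pos_mul_dotProduct_le_of_mulVec_injective {ι m : Type*} [Fintype ι] [Fintype m]
    (G : Matrix m ι ℝ) (hG : ∀ θ, G *ᵥ θ = 0 → θ = 0) :
    ∃ ε > 0, ∀ θ, ε * (θ ⬝ᵥ θ) ≤ G *ᵥ θ ⬝ᵥ G *ᵥ θ := by
  classical
  have hker : LinearMap.ker (toLpLin 2 2 G) = ⊥ := LinearMap.ker_eq_bot'.mpr fun θ hθ =>
    congrArg (WithLp.toLp 2) (hG _ (congrArg WithLp.ofLp hθ))
  obtain ⟨K, hK, hanti⟩ := (toLpLin 2 2 G).exists_antilipschitzWith hker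
  refine ⟨((K : ℝ) ^ 2)⁻¹, by positivity, fun θ => ?_⟩
  have h := ZeroHomClass.bound_of_antilipschitz (toLpLin 2 2 G) hanti (WithLp.toLp 2 θ)
  rw [toLpLin_toLp, toLin'_apply] at h
  rw [← norm_toLp_sq_eq_dotProduct, ← norm_toLp_sq_eq_dotProduct,
    inv_mul_le_iff₀ (by positivity), ← mul_pow]
  gcongr

theorem exists_pos_mul_dotProduct_le_sum_mul {ι l m c : Type*} [Fintype ι] [Fintype l]
    [Fintype m] [Fintype c] (V : ι → Matrix l m ℝ)
    (hV : ∀ θ : ι → ℝ, ∑ i, θ i • V i = 0 → θ = 0) (R : Matrix m c ℝ)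
    (hR : R.rank = Fintype.card m) :
    ∃ ε > 0, ∀ θ : ι → ℝ,
      ε * (θ ⬝ᵥ θ) ≤ ∑ j, ((∑ i, θ i • V i) * R) j ⬝ᵥ ((∑ i, θ i • V i) * R) j := by
  set G : Matrix (l × c) ι ℝ := of fun jc i => (V i * R) jc.1 jc.2
  have hG : ∀ θ, G *ᵥ θ = fun jc => ((∑ i, θ i • V i) * R) jc.1 jc.2 := by
    intro θ
    ext jc
    simp [G, mulVec, dotProduct, Matrix.sum_mul, sum_apply, mul_comm]
  obtain ⟨ε, hε, h⟩ := exists_pos_mul_dotProduct_le_of_mulVec_injective G fun θ hθ => hV θ <|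
    eq_zero_of_mul_eq_zero_of_rank_eq_card hR <| by
      ext j k
      simpa [hG] using congrFun hθ (j, k)
  refine ⟨ε, hε, fun θ => (h θ).trans_eq ?_⟩
  rw [hG]
  simp only [dotProduct, Fintype.sum_prod_type]

variable {n m R : Type*} [Fintype n] [DecidableEq n] [Fintype m]

/-- `[F, A F, …, A^(k-1) F]`: column `(r, l)` is column `l` of `A ^ r * F`. -/
def reachabilityMatrix [Semiring R] (A : Matrix n n R) (F : Matrix n m R) (k : ℕ) :
    Matrix n (Fin k × m) R :=
  of fun i rl => (A ^ (rl.1 : ℕ) * F) i rl.2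

theorem sum_dotProduct_mul_reachabilityMatrix {l : Type*} [Fintype l] [CommSemiring R]
    (A : Matrix n n R) (F : Matrix n m R) (k : ℕ) (N : Matrix l n R) :
    ∑ j, (N * reachabilityMatrix A F k) j ⬝ᵥ (N * reachabilityMatrix A F k) j =
      ∑ r ∈ Finset.range k, ∑ j, (N * (A ^ r * F)) j ⬝ᵥ (N * (A ^ r * F)) j := by
  simp only [dotProduct, Fintype.sum_prod_type]
  rw [Finset.sum_comm]
  exact Fin.sum_univ_eq_sum_range (fun r => ∑ j, (N * (A ^ r * F)) j ⬝ᵥ (N * (A ^ r * F)) j) k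

theorem trajectory_eq_pow_mulVec_add_sum [Semiring R] (A : Matrix n n R) (F : Matrix n m R)
    {x : ℕ → n → R} {u : ℕ → m → R} (hx : ∀ t, x (t + 1) = A *ᵥ x t + F *ᵥ u t) (k : ℕ) :
    x k = A ^ k *ᵥ x 0 + ∑ s ∈ Finset.range k, (A ^ (k - 1 - s) * F) *ᵥ u s := by
  induction k with
  | zero => simp
  | succ k ih =>
    have hpow : ∀ s ∈ Finset.range k, A *ᵥ ((A ^ (k - 1 - s) * F) *ᵥ u s) =
        (A ^ (k + 1 - 1 - s) * F) *ᵥ u s := by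
      intro s hs
      have hexp : k - 1 - s + 1 = k + 1 - 1 - s := by
        have := Finset.mem_range.mp hs
        omega
      rw [mulVec_mulVec, ← Matrix.mul_assoc, ← pow_succ', hexp]
    rw [hx, ih, mulVec_add, mulVec_sum, Finset.sum_congr rfl hpow, Finset.sum_range_succ,
      mulVec_mulVec, ← pow_succ']
    simp [add_assoc]

end Matrix

section

variable {Ω : Type*} [MeasurableSpace Ω] {μ : Measure Ω}

theorem sum_integral_sq_le_integral_sq_const_add_sum [IsProbabilityMeasure μ] {ι : Type*}
    {f : ι → Ω → ℝ} {s : Finset ι} (hf : ∀ i ∈ s, MemLp (f i) 2 μ)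
    (hmean : ∀ i ∈ s, μ[f i] = 0) (hindep : Set.Pairwise s fun i j => f i ⟂ᵢ[μ] f j) (a : ℝ) :
    ∑ i ∈ s, ∫ ω, f i ω ^ 2 ∂μ ≤ ∫ ω, (a + ∑ i ∈ s, f i ω) ^ 2 ∂μ := by
  have hsum : AEStronglyMeasurable (fun ω => ∑ i ∈ s, f i ω) μ :=
    Finset.aestronglyMeasurable_fun_sum _ fun i hi => (hf i hi).aestronglyMeasurable
  calc ∑ i ∈ s, ∫ ω, f i ω ^ 2 ∂μ = ∑ i ∈ s, Var[f i; μ] :=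
        Finset.sum_congr rfl fun i hi => (variance_of_integral_eq_zero
          (hf i hi).aestronglyMeasurable.aemeasurable (hmean i hi)).symm
    _ = Var[∑ i ∈ s, f i; μ] := (IndepFun.variance_sum hf hindep).symm
    _ = Var[fun ω => a + ∑ i ∈ s, f i ω; μ] := by
        rw [variance_const_add hsum a]
        congr 1 with ω
        rw [Finset.sum_apply]
    _ ≤ ∫ ω, (a + ∑ i ∈ s, f i ω) ^ 2 ∂μ := variance_le_expectation_sq (hsum.const_add a)

section Noise

variable {ι n : Type*} [Fintype n] {w : ι → Ω → n → ℝ}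

theorem memLp_dotProduct (hL2 : ∀ t i, MemLp (fun ω => w t ω i) 2 μ) (t : ι) (v : n → ℝ) :
    MemLp (fun ω => v ⬝ᵥ w t ω) 2 μ :=
  memLp_finsetSum _ fun i _ => (hL2 t i).const_mul (v i)

theorem integral_dotProduct_eq_zero [IsFiniteMeasure μ]
    (hL2 : ∀ t i, MemLp (fun ω => w t ω i) 2 μ) (hmean : ∀ t i, ∫ ω, w t ω i ∂μ = 0) (t : ι)
    (v : n → ℝ) : ∫ ω, v ⬝ᵥ w t ω ∂μ = 0 := by
  simp only [dotProduct]
  rw [integral_finsetSum _ fun i _ => ((hL2 t i).integrable one_le_two).const_mul (v i)]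
  simp [integral_const_mul, hmean]

theorem le_integral_sum_sq_add_sum_mulVec [IsProbabilityMeasure μ] {m : Type*} [Fintype m]
    (hL2 : ∀ t i, MemLp (fun ω => w t ω i) 2 μ)
    (hindep : ∀ s t, s ≠ t → IndepFun (w s) (w t) μ)
    (hmean : ∀ t i, ∫ ω, w t ω i ∂μ = 0) {εw : ℝ}
    (hvar : ∀ t (v : n → ℝ), ∫ ω, (v ⬝ᵥ w t ω) ^ 2 ∂μ ≥ εw * (v ⬝ᵥ v))
    (s : Finset ι) (c : m → ℝ) (C : ι → Matrix m n ℝ) :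
    εw * ∑ t ∈ s, ∑ j, C t j ⬝ᵥ C t j ≤ ∫ ω, ∑ j, ((c + ∑ t ∈ s, C t *ᵥ w t ω) j) ^ 2 ∂μ := by
  have hcoord : ∀ ω j, (c + ∑ t ∈ s, C t *ᵥ w t ω) j = c j + ∑ t ∈ s, C t j ⬝ᵥ w t ω := by
    intro ω j
    simp [Finset.sum_apply, mulVec]
  have hint : ∀ j, Integrable (fun ω => (c j + ∑ t ∈ s, C t j ⬝ᵥ w t ω) ^ 2) μ := fun j =>
    ((memLp_const (c j)).add (memLp_finsetSum _ fun t _ =>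
      memLp_dotProduct hL2 t (C t j))).integrable_sq
  simp_rw [hcoord]
  rw [integral_finsetSum _ fun j _ => hint j, Finset.sum_comm, Finset.mul_sum]
  refine Finset.sum_le_sum fun j _ => ?_
  calc εw * ∑ t ∈ s, C t j ⬝ᵥ C t j = ∑ t ∈ s, εw * (C t j ⬝ᵥ C t j) := Finset.mul_sum _ _ _
    _ ≤ ∑ t ∈ s, ∫ ω, (C t j ⬝ᵥ w t ω) ^ 2 ∂μ := Finset.sum_le_sum fun t _ => hvar t (C t j)
    _ ≤ _ := sum_integral_sq_le_integral_sq_const_add_sum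
        (fun t _ => memLp_dotProduct hL2 t (C t j))
        (fun t _ => integral_dotProduct_eq_zero hL2 hmean t (C t j))
        (fun t _ t' _ htt' => (hindep t t' htt').comp (φ := (C t j ⬝ᵥ ·)) (ψ := (C t' j ⬝ᵥ ·))
          (by fun_prop) (by fun_prop)) (c j)

end Noise

theorem le_integral_sum_sq_mulVec_trajectory [IsProbabilityMeasure μ]
    {n l nw : Type*} [Fintype n] [DecidableEq n] [Fintype l] [Fintype nw]
    {w : ℕ → Ω → nw → ℝ} (hL2 : ∀ t i, MemLp (fun ω => w t ω i) 2 μ)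
    (hindep : ∀ s t, s ≠ t → IndepFun (w s) (w t) μ)
    (hmean : ∀ t i, ∫ ω, w t ω i ∂μ = 0) {εw : ℝ}
    (hvar : ∀ t (v : nw → ℝ), ∫ ω, (v ⬝ᵥ w t ω) ^ 2 ∂μ ≥ εw * (v ⬝ᵥ v))
    {A : Matrix n n ℝ} {F : Matrix n nw ℝ} {x0 : n → ℝ} {x : ℕ → Ω → n → ℝ}
    (hx0 : ∀ ω, x 0 ω = x0) (hx : ∀ t ω, x (t + 1) ω = A *ᵥ x t ω + F *ᵥ w t ω)
    (N : Matrix l n ℝ) (k : ℕ) :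
    εw * ∑ r ∈ Finset.range k, ∑ j, (N * (A ^ r * F)) j ⬝ᵥ (N * (A ^ r * F)) j ≤
      ∫ ω, ∑ j, ((N *ᵥ x k ω) j) ^ 2 ∂μ := by
  have hNx : ∀ ω, N *ᵥ x k ω = (N * A ^ k) *ᵥ x0 +
      ∑ s ∈ Finset.range k, (N * (A ^ (k - 1 - s) * F)) *ᵥ w s ω := by
    intro ω
    rw [show x k ω = _ from
        trajectory_eq_pow_mulVec_add_sum A F (x := (x · ω)) (u := (w · ω)) (hx · ω) k,
      hx0, mulVec_add, mulVec_sum]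
    simp only [mulVec_mulVec]
  simp_rw [hNx]
  rw [← Finset.sum_range_reflect]
  exact le_integral_sum_sq_add_sum_mulVec hL2 hindep hmean hvar _ _ _

end

theorem pe_under_linear_feedback_general {Ω : Type*} [MeasurableSpace Ω]
    (μ : Measure Ω) [IsProbabilityMeasure μ]
    (nx nu nw p : ℕ)
    (A : Fin p → Matrix (Fin nx) (Fin nx) ℝ)
    (B : Fin p → Matrix (Fin nx) (Fin nu) ℝ)
    (K : Matrix (Fin nu) (Fin nx) ℝ) (F : Matrix (Fin nx) (Fin nw) ℝ)
    -- closed-loop dynamics matrix A_K(θ*)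
    (AK : Matrix (Fin nx) (Fin nx) ℝ)
    -- disturbance assumptions
    (w : ℕ → Ω → Fin nw → ℝ)
    (hL2 : ∀ t i, MemLp (fun ω => w t ω i) 2 μ)
    (hindep : ∀ s t, s ≠ t → IndepFun (w s) (w t) μ)
    (hmean : ∀ t i, ∫ ω, w t ω i ∂μ = 0)
    (εw : ℝ) (hεw : 0 < εw)
    (hvar : ∀ t (v : Fin nw → ℝ), ∫ ω, (v ⬝ᵥ w t ω) ^ 2 ∂μ ≥ εw * (v ⬝ᵥ v))
    -- state trajectory
    (x0 : Fin nx → ℝ) (x : ℕ → Ω → Fin nx → ℝ)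
    (hx0 : ∀ ω, x 0 ω = x0)
    (hx : ∀ t ω, x (t + 1) ω = AK.mulVec (x t ω) + F.mulVec (w t ω))
    -- (i) reachability of (A_K(θ*), F)
    (hreach : (Matrix.of fun (i : Fin nx) (jk : Fin nx × Fin nw) =>
        (AK ^ (jk.1 : ℕ) * F) i jk.2).rank = nx)
    -- (ii) linear independence of the A_{K,i} = A_i + B_i K
    (hli : ∀ θ : Fin p → ℝ, ∑ i, θ i • (A i + B i * K) = 0 → θ = 0) :
    ∀ Nu : ℕ, nx < Nu → ∃ εΦ > (0 : ℝ), ∀ t : ℕ, ∀ θ : Fin p → ℝ,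
      ∑ k ∈ Finset.Ico t (t + Nu),
        ∫ ω, ∑ j, (∑ i, θ i *
            ((A i).mulVec (x k ω) + (B i).mulVec (K.mulVec (x k ω))) j) ^ 2 ∂μ ≥
        εΦ * (θ ⬝ᵥ θ) := by
  intro Nu hNu
  obtain ⟨ε, hε, hpos⟩ := exists_pos_mul_dotProduct_le_sum_mul (fun i => A i + B i * K) hli
    (reachabilityMatrix AK F nx) (by rw [Fintype.card_fin]; exact hreach)
  refine ⟨εw * ε, mul_pos hεw hε, fun t θ => ?_⟩
  set M := ∑ i, θ i • (A i + B i * K)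
  have hΦ : ∀ v j, ∑ i, θ i * (A i *ᵥ v + B i *ᵥ (K *ᵥ v)) j = (M *ᵥ v) j := by
    intro v j
    simp [M, Matrix.sum_mulVec, add_mulVec, smul_mulVec, ← mulVec_mulVec, Finset.sum_apply,
      mul_add]
  have hk : t + (Nu - 1) ∈ Finset.Ico t (t + Nu) := Finset.mem_Ico.mpr ⟨by omega, by omega⟩
  simp_rw [hΦ]
  calc εw * ε * (θ ⬝ᵥ θ)
      ≤ εw * ∑ r ∈ Finset.range nx, ∑ j, (M * (AK ^ r * F)) j ⬝ᵥ (M * (AK ^ r * F)) j := by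
        rw [mul_assoc, ← sum_dotProduct_mul_reachabilityMatrix]
        gcongr
        exact hpos θ
    _ ≤ εw * ∑ r ∈ Finset.range (t + (Nu - 1)),
          ∑ j, (M * (AK ^ r * F)) j ⬝ᵥ (M * (AK ^ r * F)) j := by
        gcongr
        · exact fun r _ _ => Finset.sum_nonneg fun j _ => Finset.sum_nonneg fun l _ =>
            mul_self_nonneg _
        · omega
    _ ≤ ∫ ω, ∑ j, ((M *ᵥ x (t + (Nu - 1)) ω) j) ^ 2 ∂μ :=
        le_integral_sum_sq_mulVec_trajectory hL2 hindep hmean hvar hx0 hx M _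
    _ ≤ ∑ k ∈ Finset.Ico t (t + Nu), ∫ ω, ∑ j, ((M *ᵥ x k ω) j) ^ 2 ∂μ :=
        Finset.single_le_sum (f := fun k => ∫ ω, ∑ j, ((M *ᵥ x k ω) j) ^ 2 ∂μ)
          (fun k _ => integral_nonneg fun ω => Finset.sum_nonneg fun j _ => sq_nonneg _) hk

/-- Theorem 1 (persistent excitation under linear feedback): for the closed-loop system
`x_{t+1} = A_K(θ*) x_t + F w_t` with pairwise independent, mean-zero, square-integrable
disturbances satisfying `𝔼[⟨v,w_t⟩²] ≥ ε_w‖v‖²`, if `(A_K(θ*), F)` is reachable and the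
matrices `A_{K,i} = A_i + B_i K` are linearly independent, then for every `N_u > n_x` there
exists `ε_Φ > 0` with `∑_{k=t}^{t+N_u-1} 𝔼[‖Φ(x_k, K x_k) θ‖²] ≥ ε_Φ‖θ‖²` for all `t, θ`,
where `Φ(x,u)` is the matrix whose `i`-th column is `A_i x + B_i u`. -/
theorem pe_under_linear_feedback {Ω : Type*} [MeasurableSpace Ω]
    (μ : Measure Ω) [IsProbabilityMeasure μ]
    (nx nu nw p : ℕ) (hnx : 0 < nx) (hnu : 0 < nu) (hnw : 0 < nw) (hp : 0 < p)
    (A0 : Matrix (Fin nx) (Fin nx) ℝ) (A : Fin p → Matrix (Fin nx) (Fin nx) ℝ)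
    (B0 : Matrix (Fin nx) (Fin nu) ℝ) (B : Fin p → Matrix (Fin nx) (Fin nu) ℝ)
    (K : Matrix (Fin nu) (Fin nx) ℝ) (F : Matrix (Fin nx) (Fin nw) ℝ)
    (θs : Fin p → ℝ)
    -- closed-loop dynamics matrix A_K(θ*)
    (AK : Matrix (Fin nx) (Fin nx) ℝ)
    (hAK : AK = A0 + B0 * K + ∑ i, θs i • (A i + B i * K))
    -- disturbance assumptions
    (w : ℕ → Ω → Fin nw → ℝ)
    (hL2 : ∀ t i, MemLp (fun ω => w t ω i) 2 μ)
    (hindep : ∀ s t, s ≠ t → IndepFun (w s) (w t) μ)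
    (hmean : ∀ t i, ∫ ω, w t ω i ∂μ = 0)
    (εw : ℝ) (hεw : 0 < εw)
    (hvar : ∀ t (v : Fin nw → ℝ), ∫ ω, (v ⬝ᵥ w t ω) ^ 2 ∂μ ≥ εw * (v ⬝ᵥ v))
    -- state trajectory
    (x0 : Fin nx → ℝ) (x : ℕ → Ω → Fin nx → ℝ)
    (hx0 : ∀ ω, x 0 ω = x0)
    (hx : ∀ t ω, x (t + 1) ω = AK.mulVec (x t ω) + F.mulVec (w t ω))
    -- (i) reachability of (A_K(θ*), F)
    (hreach : (Matrix.of fun (i : Fin nx) (jk : Fin nx × Fin nw) =>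
        (AK ^ (jk.1 : ℕ) * F) i jk.2).rank = nx)
    -- (ii) linear independence of the A_{K,i} = A_i + B_i K
    (hli : ∀ θ : Fin p → ℝ, ∑ i, θ i • (A i + B i * K) = 0 → θ = 0) :
    ∀ Nu : ℕ, nx < Nu → ∃ εΦ > (0 : ℝ), ∀ t : ℕ, ∀ θ : Fin p → ℝ,
      ∑ k ∈ Finset.Ico t (t + Nu),
        ∫ ω, ∑ j, (∑ i, θ i *
            ((A i).mulVec (x k ω) + (B i).mulVec (K.mulVec (x k ω))) j) ^ 2 ∂μ ≥
        εΦ * (θ ⬝ᵥ θ) :=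
  pe_under_linear_feedback_general μ nx nu nw p A B K F AK w hL2 hindep hmean εw hεw hvar x0 x hx0
    hx hreach hli
end
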